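/- With r and the construction u ↦ ũ as above, if u, u′ ∈ Z¹(G,N) are cohomologous, then ũ and ũ′ are cohomologous in Z¹(H, N_H). -/
import Mathlib


/-- A 1-cocycle of `G` in a (possibly noncommutative) group `N` on which `G`
acts on the left by group automorphisms: `u (g₁ * g₂) = u g₁ * g₁ • u g₂`. -/
def IsCocycle {G N : Type*} [Group G] [Group N] [MulDistribMulAction G N]
    (u : G → N) : Prop :=
  ∀ g₁ g₂ : G, u (g₁ * g₂) = u g₁ * g₁ • u g₂

/-- Two maps `u v : G → N` are cohomologous if there is `n : N` with
`v g = n⁻¹ * u g * g • n` for all `g`. -/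
def Cohomologous {G N : Type*} [Group G] [Group N] [MulDistribMulAction G N]
    (u v : G → N) : Prop :=
  ∃ n : N, ∀ g : G, v g = n⁻¹ * u g * g • n

/-- The induced `H`-group `N_H` of `G`-covariant maps `φ : H → N`
(those with `φ (g * h) = g • φ h`), as a subgroup of the group of all maps
`H → N` with pointwise multiplication. -/
def NHgroup {H : Type*} [Group H] (G : Subgroup H) (N : Type*) [Group N]
    [MulDistribMulAction G N] : Subgroup (H → N) where
  carrier := {φ | ∀ (g : G) (h : H), φ ((g : H) * h) = g • φ h}
  mul_mem' := by
    intro a b ha hb g h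
    simp only [Pi.mul_apply, ha g h, hb g h, smul_mul']
  one_mem' := by
    intro g h
    simp
  inv_mem' := by
    intro a ha g h
    simp only [Pi.inv_apply, ha g h, smul_inv']

/-- The left action of `H` on `N_H`, given by `(h • φ) h' = φ (h' * h)`; it is an
action by group automorphisms. -/
instance NHaction {H : Type*} [Group H] (G : Subgroup H) (N : Type*) [Group N]
    [MulDistribMulAction G N] : MulDistribMulAction H ↥(NHgroup G N) where
  smul h φ := ⟨fun h' => (φ : H → N) (h' * h), fun g h' => by
    show (φ : H → N) ((g : H) * h' * h) = g • (φ : H → N) (h' * h)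
    rw [mul_assoc]; exact φ.2 g (h' * h)⟩
  one_smul φ := by
    ext h'
    show (φ : H → N) (h' * 1) = (φ : H → N) h'
    rw [mul_one]
  mul_smul h₁ h₂ φ := by
    ext h'
    show (φ : H → N) (h' * (h₁ * h₂)) = (φ : H → N) (h' * h₁ * h₂)
    rw [mul_assoc]
  smul_mul h φ ψ := by
    ext h'
    rfl
  smul_one h := by
    ext h'
    rfl

theorem tilde_preserves_cohomologous {H : Type*} [Group H] (G : Subgroup H)
    {N : Type*} [Group N] [MulDistribMulAction G N]
    (r : H → H)
    (hr_const : ∀ h h' : H, h' * h⁻¹ ∈ G → r h' = r h)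
    (hr_mem : ∀ h : H, h * (r h)⁻¹ ∈ G)
    (hr_one : r 1 = 1)
    (u u' : G → N) (hu : IsCocycle u) (hu' : IsCocycle u')
    (hcoh : Cohomologous u u')
    (w w' : H → ↥(NHgroup G N))
    (hw : ∀ h h' : H, (w h : H → N) h' =
      (⟨h' * (r h')⁻¹, hr_mem h'⟩ : G) •
        u ⟨(r h' * h) * (r (r h' * h))⁻¹, hr_mem (r h' * h)⟩)
    (hw' : ∀ h h' : H, (w' h : H → N) h' =
      (⟨h' * (r h')⁻¹, hr_mem h'⟩ : G) •
        u' ⟨(r h' * h) * (r (r h' * h))⁻¹, hr_mem (r h' * h)⟩) :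
    Cohomologous w w' := by
  obtain ⟨n, hn⟩ := hcoh
  refine ⟨⟨fun h' => (⟨h' * (r h')⁻¹, hr_mem h'⟩ : G) • n, ?_⟩, ?_⟩
  · intro g h'
    have hreq : r ((g : H) * h') = r h' := hr_const h' ((g : H) * h')
      (by simpa using g.2)
    have : (⟨(g : H) * h' * (r ((g : H) * h'))⁻¹, hr_mem _⟩ : G)
        = g * ⟨h' * (r h')⁻¹, hr_mem h'⟩ := by
      apply Subtype.ext
      simp [hreq, mul_assoc]
    show (⟨(g : H) * h' * (r ((g : H) * h'))⁻¹, hr_mem _⟩ : G) • n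
        = g • (⟨h' * (r h')⁻¹, hr_mem h'⟩ : G) • n
    rw [this, mul_smul]
  · intro h
    apply Subtype.ext
    funext h'
    have key : r (h' * h) = r (r h' * h) := by
      apply hr_const
      have : h' * h * (r h' * h)⁻¹ = h' * (r h')⁻¹ := by group
      rw [this]; exact hr_mem h'
    have hmul : (⟨h' * h * (r (h' * h))⁻¹, hr_mem (h' * h)⟩ : G)
        = (⟨h' * (r h')⁻¹, hr_mem h'⟩ : G) *
          ⟨(r h' * h) * (r (r h' * h))⁻¹, hr_mem (r h' * h)⟩ := by
      apply Subtype.ext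
      simp [key, mul_assoc]
    show (w' h : H → N) h' = ((_ : H → N) h')⁻¹ * (w h : H → N) h' * _
    rw [hw', hw, hn]
    show _ = (_ • n)⁻¹ * _ * (⟨h' * h * (r (h' * h))⁻¹, hr_mem (h' * h)⟩ : G) • n
    rw [hmul, mul_smul, smul_mul', smul_mul', smul_inv', mul_assoc]
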